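/- arXiv:1711.08837 — 3 statements merged into one kernel-verified Lean document; each statement's English description precedes it below -/
import Mathlib

section
/- Let G be a (K_3, P_2 + P_4)-free graph containing an induced 5-cycle on vertices v_1, ..., v_5 in cyclic order, and for each i let W_i be the set of vertices whose unique neighbour on the cycle is v_i. Then for each i, the graph induced by W_i ∪ W_{i+2} is P_4-free (indices mod 5). -/
/-!
Every vertex of `Wᵢ ∪ W_{i+2}` has its only cycle neighbour in `{vᵢ, v_{i+2}}`, so it is
anticomplete to the cycle edge `v_{i+3} v_{i+4}`. An induced `P₄` in `Wᵢ ∪ W_{i+2}` together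
with that edge would be an induced `P₂ + P₄`.
-/

/-- A graph is `(P₂ + P₄)`-free if it contains no six distinct vertices inducing
the disjoint union of a 2-vertex path `a b` and a 4-vertex path `c d e f`. -/
def P2P4Free {V : Type*} (G : SimpleGraph V) : Prop :=
  ¬ ∃ a b c d e f : V, [a, b, c, d, e, f].Nodup ∧
    G.Adj a b ∧ G.Adj c d ∧ G.Adj d e ∧ G.Adj e f ∧
    ¬ G.Adj a c ∧ ¬ G.Adj a d ∧ ¬ G.Adj a e ∧ ¬ G.Adj a f ∧
    ¬ G.Adj b c ∧ ¬ G.Adj b d ∧ ¬ G.Adj b e ∧ ¬ G.Adj b f ∧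
    ¬ G.Adj c e ∧ ¬ G.Adj c f ∧ ¬ G.Adj d f

/-- The set of vertices not on the 5-cycle `v` with no neighbour on the cycle. -/
def cycU {V : Type*} (G : SimpleGraph V) (v : Fin 5 → V) : Set V :=
  {u | u ∉ Set.range v ∧ ∀ j : Fin 5, ¬ G.Adj u (v j)}

/-- The set of vertices not on the 5-cycle `v` whose unique neighbour on the
cycle is `v i`. -/
def cycW {V : Type*} (G : SimpleGraph V) (v : Fin 5 → V) (i : Fin 5) : Set V :=
  {u | u ∉ Set.range v ∧ ∀ j : Fin 5, G.Adj u (v j) ↔ j = i}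

/-- The set of vertices not on the 5-cycle `v` adjacent on the cycle to exactly
`v (i - 1)` and `v (i + 1)`. -/
def cycV {V : Type*} (G : SimpleGraph V) (v : Fin 5 → V) (i : Fin 5) : Set V :=
  {u | u ∉ Set.range v ∧ ∀ j : Fin 5, G.Adj u (v j) ↔ (j = i - 1 ∨ j = i + 1)}

section

variable {V : Type*} {G : SimpleGraph V}

theorem P2P4Free.not_exists_induced_P4_of_anticomplete_edge (hG : P2P4Free G)
    {x y : V} (hxy : G.Adj x y) {S : Set V} (hxS : x ∉ S) (hyS : y ∉ S)
    (hSx : ∀ u ∈ S, ¬ G.Adj x u) (hSy : ∀ u ∈ S, ¬ G.Adj y u) :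
    ¬ ∃ a b c d : V, [a, b, c, d].Nodup ∧ a ∈ S ∧ b ∈ S ∧ c ∈ S ∧ d ∈ S ∧
      G.Adj a b ∧ G.Adj b c ∧ G.Adj c d ∧
      ¬ G.Adj a c ∧ ¬ G.Adj a d ∧ ¬ G.Adj b d := by
  rintro ⟨a, b, c, d, hnd, ha, hb, hc, hd, hab, hbc, hcd, hac, had, hbd⟩
  have hx : x ∉ [a, b, c, d] := by
    simp only [List.mem_cons, List.not_mem_nil, or_false]
    rintro (rfl | rfl | rfl | rfl) <;> contradiction
  have hy : y ∉ x :: [a, b, c, d] := by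
    simp only [List.mem_cons, List.not_mem_nil, or_false]
    rintro (rfl | rfl | rfl | rfl | rfl)
    exacts [hxy.ne rfl, hyS ha, hyS hb, hyS hc, hyS hd]
  refine hG ⟨y, x, a, b, c, d, ?_, hxy.symm, hab, hbc, hcd,
    hSy a ha, hSy b hb, hSy c hc, hSy d hd, hSx a ha, hSx b hb, hSx c hc, hSx d hd,
    hac, had, hbd⟩
  exact List.nodup_cons.2 ⟨hy, List.nodup_cons.2 ⟨hx, hnd⟩⟩

theorem not_adj_of_mem_cycW {v : Fin 5 → V} {i j : Fin 5} {u : V} (hu : u ∈ cycW G v i)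
    (hji : j ≠ i) : ¬ G.Adj (v j) u :=
  fun h => hji ((hu.2 j).1 h.symm)

theorem apply_notMem_cycW (v : Fin 5 → V) (i j : Fin 5) : v j ∉ cycW G v i :=
  fun h => h.1 ⟨j, rfl⟩

end

theorem K3P2P4_WiWi2_P4free_general {V : Type*} (G : SimpleGraph V)
    (hP2P4 : P2P4Free G)
    (v : Fin 5 → V)
    (hcyc : ∀ i : Fin 5, G.Adj (v i) (v (i + 1))) :
    ∀ i : Fin 5, ¬ ∃ a b c d : V, [a, b, c, d].Nodup ∧
      a ∈ cycW G v i ∪ cycW G v (i + 2) ∧ b ∈ cycW G v i ∪ cycW G v (i + 2) ∧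
      c ∈ cycW G v i ∪ cycW G v (i + 2) ∧ d ∈ cycW G v i ∪ cycW G v (i + 2) ∧
      G.Adj a b ∧ G.Adj b c ∧ G.Adj c d ∧
      ¬ G.Adj a c ∧ ¬ G.Adj a d ∧ ¬ G.Adj b d := by
  intro i
  have hne : i + 3 ≠ i ∧ i + 3 ≠ i + 2 ∧ i + 4 ≠ i ∧ i + 4 ≠ i + 2 := by
    revert i; decide
  have hedge : G.Adj (v (i + 3)) (v (i + 4)) :=
    (by rw [add_assoc]; rfl : i + 3 + 1 = i + 4) ▸ hcyc (i + 3)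
  have hfar : ∀ j, j ≠ i → j ≠ i + 2 → ∀ u ∈ cycW G v i ∪ cycW G v (i + 2),
      ¬ G.Adj (v j) u := fun j hji hji2 u hu =>
    hu.elim (not_adj_of_mem_cycW · hji) (not_adj_of_mem_cycW · hji2)
  have hoff : ∀ j, v j ∉ cycW G v i ∪ cycW G v (i + 2) := fun j h =>
    h.elim (apply_notMem_cycW v i j) (apply_notMem_cycW v (i + 2) j)
  exact hP2P4.not_exists_induced_P4_of_anticomplete_edge hedge (hoff _) (hoff _)
    (hfar _ hne.1 hne.2.1) (hfar _ hne.2.2.1 hne.2.2.2)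

/-- In a `(K₃, P₂ + P₄)`-free graph with an induced 5-cycle, the subgraph
induced by `Wᵢ ∪ W_{i+2}` is `P₄`-free. -/
theorem K3P2P4_WiWi2_P4free {V : Type*} [Fintype V] (G : SimpleGraph V)
    (hK3 : G.CliqueFree 3) (hP2P4 : P2P4Free G)
    (v : Fin 5 → V) (hinj : Function.Injective v)
    (hcyc : ∀ i : Fin 5, G.Adj (v i) (v (i + 1)))
    (hindC : ∀ i j : Fin 5, G.Adj (v i) (v j) → j = i + 1 ∨ j = i - 1) :
    ∀ i : Fin 5, ¬ ∃ a b c d : V, [a, b, c, d].Nodup ∧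
      a ∈ cycW G v i ∪ cycW G v (i + 2) ∧ b ∈ cycW G v i ∪ cycW G v (i + 2) ∧
      c ∈ cycW G v i ∪ cycW G v (i + 2) ∧ d ∈ cycW G v i ∪ cycW G v (i + 2) ∧
      G.Adj a b ∧ G.Adj b c ∧ G.Adj c d ∧
      ¬ G.Adj a c ∧ ¬ G.Adj a d ∧ ¬ G.Adj b d :=
  K3P2P4_WiWi2_P4free_general G hP2P4 v hcyc
end

section
/- Let G be a (K_3, P_2 + P_4)-free graph containing an induced 5-cycle on vertices v_1, ..., v_5 in cyclic order. Let W_i be the set of vertices whose unique cycle-neighbour is v_i, and V_i the set of vertices adjacent on the cycle to exactly v_{i-1} and v_{i+1}. Then for each i, every vertex of V_i is either complete or anti-complete to W_i. -/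
/-!
If `x ∈ Vᵢ` were adjacent to `y ∈ Wᵢ` but not to `z ∈ Wᵢ`, then `y` and `z` would be
non-adjacent (they share the neighbour `vᵢ` and there is no triangle), so `x y vᵢ z` would
be an induced `P₄`. None of its vertices sees `vᵢ₊₂` or `vᵢ₊₃`, and the edge `vᵢ₊₂ vᵢ₊₃` would
complete an induced `P₂ + P₄`.
-/

section P2P4

variable {V : Type*} {G : SimpleGraph V}

/-- The six vertices need not be assumed distinct: the adjacency pattern forces it. -/
theorem P2P4Free.false_of_adj_pattern (h : P2P4Free G) {a b c d e f : V}
    (hab : G.Adj a b) (hcd : G.Adj c d) (hde : G.Adj d e) (hef : G.Adj e f)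
    (hac : ¬ G.Adj a c) (had : ¬ G.Adj a d) (hae : ¬ G.Adj a e) (haf : ¬ G.Adj a f)
    (hbc : ¬ G.Adj b c) (hbd : ¬ G.Adj b d) (hbe : ¬ G.Adj b e) (hbf : ¬ G.Adj b f)
    (hce : ¬ G.Adj c e) (hcf : ¬ G.Adj c f) (hdf : ¬ G.Adj d f) : False := by
  refine h ⟨a, b, c, d, e, f, ?_, hab, hcd, hde, hef,
    hac, had, hae, haf, hbc, hbd, hbe, hbf, hce, hcf, hdf⟩
  simp only [List.nodup_cons, List.mem_cons, List.not_mem_nil, List.nodup_nil, or_false,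
    not_or, and_true]
  exact ⟨⟨hab.ne, (G.ne_of_adj_of_not_adj hcd had).symm,
      (G.ne_of_adj_of_not_adj hcd.symm hac).symm, (G.ne_of_adj_of_not_adj hde.symm had).symm,
      (G.ne_of_adj_of_not_adj hef.symm hae).symm⟩,
    ⟨(G.ne_of_adj_of_not_adj hcd hbd).symm, (G.ne_of_adj_of_not_adj hcd.symm hbc).symm,
      (G.ne_of_adj_of_not_adj hde.symm hbd).symm, (G.ne_of_adj_of_not_adj hef.symm hbe).symm⟩,
    ⟨hcd.ne, (G.ne_of_adj_of_not_adj hef hcf).symm, (G.ne_of_adj_of_not_adj hef.symm hce).symm⟩,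
    ⟨hde.ne, fun hdf' => hcf (hdf' ▸ hcd)⟩, hef.ne, not_false⟩

end P2P4

section FiveCycle

variable {V : Type*} {G : SimpleGraph V} {v : Fin 5 → V} {i j : Fin 5} {x y z : V}

theorem adj_of_mem_cycW (hy : y ∈ cycW G v i) : G.Adj y (v i) :=
  (hy.2 i).2 rfl

theorem not_adj_of_mem_cycW_s13 (hy : y ∈ cycW G v i) (hj : j ≠ i) : ¬ G.Adj (v j) y :=
  fun h => hj ((hy.2 j).1 h.symm)

theorem not_adj_of_mem_cycV (hx : x ∈ cycV G v i) (hj₁ : j ≠ i - 1) (hj₂ : j ≠ i + 1) :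
    ¬ G.Adj (v j) x :=
  fun h => ((hx.2 j).1 h.symm).elim hj₁ hj₂

theorem not_adj_of_mem_cycW_of_mem_cycW (hK3 : G.CliqueFree 3) (hy : y ∈ cycW G v i)
    (hz : z ∈ cycW G v i) : ¬ G.Adj y z := fun hyz =>
  G.isIndepSet_neighborSet_of_triangleFree hK3 (v i) (adj_of_mem_cycW hy).symm
    (adj_of_mem_cycW hz).symm hyz.ne hyz

end FiveCycle

theorem K3P2P4_Vi_triv_Wi_general {V : Type*} (G : SimpleGraph V)
    (hK3 : G.CliqueFree 3) (hP2P4 : P2P4Free G)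
    (v : Fin 5 → V)
    (hcyc : ∀ i : Fin 5, G.Adj (v i) (v (i + 1)))
    (hindC : ∀ i j : Fin 5, G.Adj (v i) (v j) → j = i + 1 ∨ j = i - 1) :
    ∀ i : Fin 5, ∀ x ∈ cycV G v i,
      (∀ y ∈ cycW G v i, G.Adj x y) ∨ (∀ y ∈ cycW G v i, ¬ G.Adj x y) := by
  intro i x hx
  by_contra! hmixed
  obtain ⟨⟨z, hz, hxz⟩, y, hy, hxy⟩ := hmixed
  have hedge : G.Adj (v (i + 2)) (v (i + 3)) := by
    simpa [add_assoc] using hcyc (i + 2)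
  have hfar : ∀ k : Fin 5, k = i + 2 ∨ k = i + 3 → ¬ G.Adj (v k) (v i) := by
    rintro k hk h
    rcases hindC _ _ h with h | h <;> omega
  refine hP2P4.false_of_adj_pattern (c := x) (d := y) (e := v i) (f := z) hedge hxy
    (adj_of_mem_cycW hy) (adj_of_mem_cycW hz).symm
    (not_adj_of_mem_cycV hx (by omega) (by omega)) (not_adj_of_mem_cycW_s13 hy (by omega))
    (hfar _ (.inl rfl)) (not_adj_of_mem_cycW_s13 hz (by omega))
    (not_adj_of_mem_cycV hx (by omega) (by omega)) (not_adj_of_mem_cycW_s13 hy (by omega))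
    (hfar _ (.inr rfl)) (not_adj_of_mem_cycW_s13 hz (by omega))
    (fun h => not_adj_of_mem_cycV hx (j := i) (by omega) (by omega) h.symm) hxz
    (not_adj_of_mem_cycW_of_mem_cycW hK3 hy hz)

/-- In a `(K₃, P₂ + P₄)`-free graph with an induced 5-cycle, every vertex of
`Vᵢ` is either complete or anti-complete to `Wᵢ`. -/
theorem K3P2P4_Vi_triv_Wi {V : Type*} [Fintype V] (G : SimpleGraph V)
    (hK3 : G.CliqueFree 3) (hP2P4 : P2P4Free G)
    (v : Fin 5 → V) (hinj : Function.Injective v)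
    (hcyc : ∀ i : Fin 5, G.Adj (v i) (v (i + 1)))
    (hindC : ∀ i j : Fin 5, G.Adj (v i) (v j) → j = i + 1 ∨ j = i - 1) :
    ∀ i : Fin 5, ∀ x ∈ cycV G v i,
      (∀ y ∈ cycW G v i, G.Adj x y) ∨ (∀ y ∈ cycW G v i, ¬ G.Adj x y) :=
  K3P2P4_Vi_triv_Wi_general G hK3 hP2P4 v hcyc hindC
end

section
/- Let G be a connected (K_3, P_1 + P_5)-free graph containing an induced 5-cycle, and let U be the set of vertices with no neighbour on the cycle. Then any two vertices of U have the same neighbourhood in V(G) \ U, and consequently U is an independent set. -/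
/-- A graph is `(P₁ + P₅)`-free if it contains no six distinct vertices inducing
the disjoint union of an isolated vertex `a` and a 5-vertex path `b c d e f`. -/
def P1P5Free {V : Type*} (G : SimpleGraph V) : Prop :=
  ¬ ∃ a b c d e f : V, [a, b, c, d, e, f].Nodup ∧
    G.Adj b c ∧ G.Adj c d ∧ G.Adj d e ∧ G.Adj e f ∧
    ¬ G.Adj a b ∧ ¬ G.Adj a c ∧ ¬ G.Adj a d ∧ ¬ G.Adj a e ∧ ¬ G.Adj a f ∧
    ¬ G.Adj b d ∧ ¬ G.Adj b e ∧ ¬ G.Adj b f ∧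
    ¬ G.Adj c e ∧ ¬ G.Adj c f ∧ ¬ G.Adj d f

/-!
Let `w ∉ U` have a neighbour `u ∈ U` and a neighbour on the cycle, and let `u' ∈ U` miss `w`.
Triangle-freeness gives a cycle neighbour `v i` of `w` with suitable non-neighbours among the
next cycle vertices, and then `u'` with the path `u w v(i) v(i+1) v(i+2)` (when `u ≁ u'`), or
`v(i+3)` with the path `u' u w v(i) v(i+1)` (when `u ~ u'`), is an induced `P₁ + P₅`. So `w`
sees all of `U`. Connectivity gives an edge from `U` to such a `w`, so an edge inside `U`
would close a triangle.
-/

section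

variable {V : Type*} {G : SimpleGraph V}

theorem SimpleGraph.CliqueFree.not_adj_of_adj_of_adj (hG : G.CliqueFree 3) {a b c : V}
    (hab : G.Adj a b) (hac : G.Adj a c) : ¬ G.Adj b c :=
  fun hbc => by classical exact hG _ (SimpleGraph.is3Clique_triple_iff.2 ⟨hab, hac, hbc⟩)

/-- The six vertices need not be assumed distinct: the prescribed adjacencies already
separate them. -/
theorem P1P5Free.elim (hG : P1P5Free G) {a b c d e f : V}
    (hbc : G.Adj b c) (hcd : G.Adj c d) (hde : G.Adj d e) (hef : G.Adj e f)
    (hab : ¬ G.Adj a b) (hac : ¬ G.Adj a c) (had : ¬ G.Adj a d) (hae : ¬ G.Adj a e)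
    (haf : ¬ G.Adj a f) (hbd : ¬ G.Adj b d) (hbe : ¬ G.Adj b e) (hbf : ¬ G.Adj b f)
    (hce : ¬ G.Adj c e) (hcf : ¬ G.Adj c f) (hdf : ¬ G.Adj d f) : False := by
  refine hG ⟨a, b, c, d, e, f, ?_, hbc, hcd, hde, hef, hab, hac, had, hae, haf, hbd, hbe, hbf,
    hce, hcf, hdf⟩
  simp only [List.nodup_cons, List.mem_cons, List.not_mem_nil, List.nodup_nil]
  grind (splits := 16) [SimpleGraph.Adj.symm]

def IsInducedFiveCycle (G : SimpleGraph V) (v : Fin 5 → V) : Prop :=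
  ∀ i j, G.Adj (v i) (v j) ↔ j = i + 1 ∨ j = i - 1

namespace IsInducedFiveCycle

variable {v : Fin 5 → V} {u u' w : V}

theorem adj (hC : IsInducedFiveCycle G v) {i j : Fin 5} (h : j = i + 1 ∨ j = i - 1) :
    G.Adj (v i) (v j) :=
  (hC i j).2 h

theorem not_adj (hC : IsInducedFiveCycle G v) {i j : Fin 5} (h : ¬ (j = i + 1 ∨ j = i - 1)) :
    ¬ G.Adj (v i) (v j) :=
  mt (hC i j).1 h

theorem not_adj_of_adj (hC : IsInducedFiveCycle G v) (hK3 : G.CliqueFree 3) {i j : Fin 5}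
    (hw : G.Adj w (v i)) (h : j = i + 1 ∨ j = i - 1) : ¬ G.Adj w (v j) :=
  hK3.not_adj_of_adj_of_adj hw.symm (hC.adj h)

theorem exists_adj_not_adj_add_one_not_adj_add_two (hC : IsInducedFiveCycle G v)
    (hK3 : G.CliqueFree 3) {j : Fin 5} (hw : G.Adj w (v j)) :
    ∃ i, G.Adj w (v i) ∧ ¬ G.Adj w (v (i + 1)) ∧ ¬ G.Adj w (v (i + 2)) := by
  by_cases hw₂ : G.Adj w (v (j + 2))
  · exact ⟨j + 2, hw₂, hC.not_adj_of_adj hK3 hw₂ (by omega),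
      hC.not_adj_of_adj hK3 hw (by omega)⟩
  · exact ⟨j, hw, hC.not_adj_of_adj hK3 hw (by omega), hw₂⟩

theorem adj_of_not_adj (hC : IsInducedFiveCycle G v) (hP : P1P5Free G)
    (hu : ∀ j, ¬ G.Adj u (v j)) (hu' : ∀ j, ¬ G.Adj u' (v j)) (huu' : ¬ G.Adj u u')
    (huw : G.Adj u w) {i : Fin 5} (hi : G.Adj w (v i)) (hi₁ : ¬ G.Adj w (v (i + 1)))
    (hi₂ : ¬ G.Adj w (v (i + 2))) : G.Adj u' w := by
  by_contra hu'w
  exact hP.elim (a := u') (e := v (i + 1)) (f := v (i + 2)) huw hi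
    (hC.adj (by omega)) (hC.adj (by omega)) (huu' ·.symm) hu'w (hu' _) (hu' _) (hu' _)
    (hu _) (hu _) (hu _) hi₁ hi₂ (hC.not_adj (by omega))

theorem adj_of_adj (hC : IsInducedFiveCycle G v) (hP : P1P5Free G)
    (hu : ∀ j, ¬ G.Adj u (v j)) (hu' : ∀ j, ¬ G.Adj u' (v j)) (huu' : G.Adj u u')
    (huw : G.Adj u w) {i : Fin 5} (hi : G.Adj w (v i)) (hi₁ : ¬ G.Adj w (v (i + 1)))
    (hi₃ : ¬ G.Adj w (v (i + 3))) : G.Adj u' w := by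
  by_contra hu'w
  exact hP.elim (a := v (i + 3)) (f := v (i + 1)) huu'.symm huw hi
    (hC.adj (by omega)) (hu' _ ·.symm) (hu _ ·.symm) (hi₃ ·.symm) (hC.not_adj (by omega))
    (hC.not_adj (by omega)) hu'w (hu' _) (hu' _) (hu _) (hu _) hi₁

theorem adj_of_anticomplete (hC : IsInducedFiveCycle G v) (hK3 : G.CliqueFree 3)
    (hP : P1P5Free G) (hu : ∀ j, ¬ G.Adj u (v j)) (hu' : ∀ j, ¬ G.Adj u' (v j))
    (huw : G.Adj u w) {j : Fin 5} (hw : G.Adj w (v j)) : G.Adj u' w := by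
  obtain ⟨i, hi, hi₁, hi₂⟩ := hC.exists_adj_not_adj_add_one_not_adj_add_two hK3 hw
  by_cases huu' : G.Adj u u'
  · by_cases hi₃ : G.Adj w (v (i + 3))
    · refine hC.adj_of_adj hP hu hu' huu' huw hi₃ (hC.not_adj_of_adj hK3 hi (by omega)) ?_
      rwa [show i + 3 + 3 = i + 1 by omega]
    · exact hC.adj_of_adj hP hu hu' huu' huw hi hi₁ hi₃
  · exact hC.adj_of_not_adj hP hu hu' huu' huw hi hi₁ hi₂

theorem adj_of_mem_cycU (hC : IsInducedFiveCycle G v) (hK3 : G.CliqueFree 3)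
    (hP : P1P5Free G) (hu : u ∈ cycU G v) (hu' : u' ∈ cycU G v) (hw : w ∉ cycU G v)
    (huw : G.Adj u w) : G.Adj u' w := by
  obtain ⟨j, hj⟩ : ∃ j, G.Adj w (v j) := by
    by_contra! h
    refine hw ⟨?_, h⟩
    rintro ⟨k, rfl⟩
    exact hu.2 k huw
  exact hC.adj_of_anticomplete hK3 hP hu.2 hu'.2 huw hj

theorem not_adj_of_mem_cycU (hC : IsInducedFiveCycle G v) (hconn : G.Connected)
    (hK3 : G.CliqueFree 3) (hP : P1P5Free G) (hu : u ∈ cycU G v) (hu' : u' ∈ cycU G v) :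
    ¬ G.Adj u u' := by
  obtain ⟨p⟩ := hconn.preconnected u (v 0)
  obtain ⟨d, -, hd₁, hd₂⟩ := p.exists_boundary_dart _ hu (fun h => h.1 ⟨0, rfl⟩)
  exact hK3.not_adj_of_adj_of_adj (hC.adj_of_mem_cycU hK3 hP hd₁ hu hd₂ d.adj).symm
    (hC.adj_of_mem_cycU hK3 hP hd₁ hu' hd₂ d.adj).symm

end IsInducedFiveCycle

end

theorem K3P1P5_U_twins_general {V : Type*} (G : SimpleGraph V)
    (hconn : G.Connected)
    (hK3 : G.CliqueFree 3) (hP1P5 : P1P5Free G)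
    (v : Fin 5 → V)
    (hcyc : ∀ i : Fin 5, G.Adj (v i) (v (i + 1)))
    (hindC : ∀ i j : Fin 5, G.Adj (v i) (v j) → j = i + 1 ∨ j = i - 1) :
    (∀ u ∈ cycU G v, ∀ u' ∈ cycU G v, ∀ w ∉ cycU G v,
        (G.Adj u w ↔ G.Adj u' w)) ∧
    (∀ u ∈ cycU G v, ∀ u' ∈ cycU G v, ¬ G.Adj u u') := by
  have hC : IsInducedFiveCycle G v := fun i j =>
    ⟨hindC i j, by rintro (rfl | rfl); exacts [hcyc i, by simpa using (hcyc (i - 1)).symm]⟩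
  refine ⟨fun u hu u' hu' w hw => ?_, fun u hu u' hu' => ?_⟩
  · exact ⟨hC.adj_of_mem_cycU hK3 hP1P5 hu hu' hw, hC.adj_of_mem_cycU hK3 hP1P5 hu' hu hw⟩
  · exact hC.not_adj_of_mem_cycU hconn hK3 hP1P5 hu hu'

/-- In a connected `(K₃, P₁ + P₅)`-free graph with an induced 5-cycle, any two
vertices of `U` have the same neighbourhood outside `U`, and `U` is an
independent set. -/
theorem K3P1P5_U_twins {V : Type*} [Fintype V] (G : SimpleGraph V)
    (hconn : G.Connected)
    (hK3 : G.CliqueFree 3) (hP1P5 : P1P5Free G)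
    (v : Fin 5 → V) (hinj : Function.Injective v)
    (hcyc : ∀ i : Fin 5, G.Adj (v i) (v (i + 1)))
    (hindC : ∀ i j : Fin 5, G.Adj (v i) (v j) → j = i + 1 ∨ j = i - 1) :
    (∀ u ∈ cycU G v, ∀ u' ∈ cycU G v, ∀ w ∉ cycU G v,
        (G.Adj u w ↔ G.Adj u' w)) ∧
    (∀ u ∈ cycU G v, ∀ u' ∈ cycU G v, ¬ G.Adj u u') :=
  K3P1P5_U_twins_general G hconn hK3 hP1P5 v hcyc hindC
end
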